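/- arXiv:2112.03555 — 2 statements merged into one kernel-verified Lean document; each statement's English description precedes it below -/
import Mathlib

section
/- Let B ∈ {0,1}^{d×d} be the adjacency matrix of a directed graph G on d vertices (B_{ij} = 1 iff there is an edge i → j). Then G is acyclic if and only if Tr(e^B) - d = 0. -/
open Matrix

/-- A directed cycle in the graph with edge relation `r` on `Fin d`: a closed walk of
positive length. -/
def HasDirCycle {d : ℕ} (r : Fin d → Fin d → Prop) : Prop :=
  ∃ (k : ℕ) (v : ℕ → Fin d), 0 < k ∧ v 0 = v k ∧ ∀ i < k, r (v i) (v (i + 1))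

section Aux

variable {d : ℕ} {B : Matrix (Fin d) (Fin d) ℝ}

lemma aux_pow_nonneg (hB : ∀ i j, B i j = 0 ∨ B i j = 1) :
    ∀ (n : ℕ) (i j : Fin d), 0 ≤ (B ^ n) i j := by
  intro n
  induction n with
  | zero =>
    intro i j
    rw [pow_zero]
    by_cases h : i = j
    · rw [h, Matrix.one_apply_eq]; norm_num
    · rw [Matrix.one_apply_ne h]
  | succ n ih =>
    intro i j
    rw [pow_succ, Matrix.mul_apply]
    refine Finset.sum_nonneg fun l _ => mul_nonneg (ih i l) ?_
    rcases hB l j with h | h <;> rw [h] <;> norm_num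

lemma aux_walk_pos (hB : ∀ i j, B i j = 0 ∨ B i j = 1) :
    ∀ (k : ℕ) (v : ℕ → Fin d), (∀ i < k, B (v i) (v (i + 1)) = 1) →
      0 < (B ^ k) (v 0) (v k) := by
  intro k
  induction k with
  | zero =>
    intro v _
    simp [Matrix.one_apply_eq]
  | succ k ih =>
    intro v hv
    have h1 : 0 < (B ^ k) (v 0) (v k) := ih v fun i hi => hv i (Nat.lt_succ_of_lt hi)
    have h2 : B (v k) (v (k + 1)) = 1 := hv k (Nat.lt_succ_self k)
    rw [pow_succ, Matrix.mul_apply]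
    refine Finset.sum_pos' (fun l _ => mul_nonneg (aux_pow_nonneg hB k _ l) ?_)
      ⟨v k, Finset.mem_univ _, ?_⟩
    · rcases hB l (v (k + 1)) with h | h <;> rw [h] <;> norm_num
    · rw [h2, mul_one]; exact h1

lemma aux_pos_walk (hB : ∀ i j, B i j = 0 ∨ B i j = 1) :
    ∀ (k : ℕ) (i j : Fin d), 0 < (B ^ k) i j →
      ∃ v : ℕ → Fin d, v 0 = i ∧ v k = j ∧ ∀ m < k, B (v m) (v (m + 1)) = 1 := by
  intro k
  induction k with
  | zero =>
    intro i j h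
    rw [pow_zero] at h
    have hij : i = j := by
      by_contra hne
      rw [Matrix.one_apply_ne hne] at h
      exact lt_irrefl 0 h
    exact ⟨fun _ => i, rfl, hij.symm ▸ rfl, fun m hm => absurd hm (Nat.not_lt_zero m)⟩
  | succ k ih =>
    intro i j h
    rw [pow_succ, Matrix.mul_apply] at h
    have : ∃ l : Fin d, 0 < (B ^ k) i l * B l j := by
      by_contra hc
      push_neg at hc
      have : ∑ l, (B ^ k) i l * B l j ≤ 0 := Finset.sum_nonpos fun l _ => hc l
      linarith
    obtain ⟨l, hl⟩ := this
    have hBnn : 0 ≤ B l j := by rcases hB l j with h' | h' <;> rw [h'] <;> norm_num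
    have h1 : 0 < (B ^ k) i l := by
      rcases mul_pos_iff.mp hl with ⟨ha, _⟩ | ⟨_, hb⟩
      · exact ha
      · linarith
    have h2 : B l j = 1 := by
      rcases hB l j with h' | h'
      · exfalso; rw [h', mul_zero] at hl; exact lt_irrefl 0 hl
      · exact h'
    obtain ⟨v, hv0, hvk, hve⟩ := ih i l h1
    refine ⟨fun m => if m ≤ k then v m else j, ?_, ?_, ?_⟩
    · simpa using hv0
    · simp
    intro m hm
    rcases Nat.lt_succ_iff_lt_or_eq.mp hm with hmk | hmk
    · have hm1 : m + 1 ≤ k := hmk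
      simp only [le_of_lt hmk, hm1, if_true]
      exact hve m hmk
    · subst hmk
      simp only [le_refl, if_true, Nat.lt_irrefl, Nat.not_succ_le_self, if_false]
      rw [hvk]; exact h2

lemma aux_trace_pow_nonneg (hB : ∀ i j, B i j = 0 ∨ B i j = 1) (n : ℕ) :
    0 ≤ (B ^ n).trace :=
  Finset.sum_nonneg fun i _ => aux_pow_nonneg hB n i i

lemma aux_no_cycle_iff (hB : ∀ i j, B i j = 0 ∨ B i j = 1) :
    ¬ HasDirCycle (fun i j => B i j = 1) ↔ ∀ n : ℕ, (B ^ (n + 1)).trace = 0 := by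
  constructor
  · intro hnc n
    by_contra hne
    have hpos : 0 < (B ^ (n + 1)).trace :=
      lt_of_le_of_ne (aux_trace_pow_nonneg hB (n + 1)) (Ne.symm hne)
    have : ∃ i : Fin d, 0 < (B ^ (n + 1)) i i := by
      by_contra hc
      push_neg at hc
      have : (B ^ (n + 1)).trace ≤ 0 := Finset.sum_nonpos fun i _ => hc i
      linarith
    obtain ⟨i, hi⟩ := this
    obtain ⟨v, hv0, hvk, hve⟩ := aux_pos_walk hB (n + 1) i i hi
    exact hnc ⟨n + 1, v, Nat.succ_pos n, by rw [hv0, hvk], hve⟩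
  · rintro hz ⟨k, v, hk, hvk, hve⟩
    have hpos : 0 < (B ^ k) (v 0) (v k) := aux_walk_pos hB k v hve
    have htr : 0 < (B ^ k).trace := by
      have hle : (B ^ k) (v 0) (v 0) ≤ (B ^ k).trace := by
        unfold Matrix.trace
        exact Finset.single_le_sum (fun i _ => aux_pow_nonneg hB k i i) (Finset.mem_univ (v 0))
      rw [← hvk] at hpos
      exact lt_of_lt_of_le hpos hle
    obtain ⟨n, rfl⟩ := Nat.exists_eq_add_of_lt hk
    rw [zero_add] at htr
    rw [hz n] at htr
    exact lt_irrefl 0 htr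

end Aux

set_option maxHeartbeats 1000000

/-- Let `B ∈ {0,1}^{d×d}` be the adjacency matrix of a directed graph `G` on `d` vertices
(`B i j = 1` iff there is an edge `i → j`). Then `G` is acyclic iff `Tr (e^B) - d = 0`. -/
theorem acyclic_iff_trace_exp_sub_card_eq_zero (d : ℕ) (B : Matrix (Fin d) (Fin d) ℝ)
    (hB : ∀ i j, B i j = 0 ∨ B i j = 1) :
    ¬ HasDirCycle (fun i j => B i j = 1) ↔ (NormedSpace.exp B).trace - d = 0 := by
  letI : SeminormedRing (Matrix (Fin d) (Fin d) ℝ) := Matrix.linftyOpSemiNormedRing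
  letI : NormedRing (Matrix (Fin d) (Fin d) ℝ) := Matrix.linftyOpNormedRing
  letI : NormedAlgebra ℝ (Matrix (Fin d) (Fin d) ℝ) := Matrix.linftyOpNormedAlgebra
  have hsum : Summable fun n : ℕ => (Nat.factorial n : ℝ)⁻¹ • B ^ n :=
    NormedSpace.expSeries_summable' (𝕂 := ℝ) B
  set T : Matrix (Fin d) (Fin d) ℝ →L[ℝ] ℝ :=
    LinearMap.toContinuousLinearMap (Matrix.traceLinearMap (Fin d) ℝ ℝ) with hT
  have htr : (NormedSpace.exp B).trace = ∑' n : ℕ, (Nat.factorial n : ℝ)⁻¹ * (B ^ n).trace := by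
    have : (NormedSpace.exp B).trace = T (∑' n : ℕ, (Nat.factorial n : ℝ)⁻¹ • B ^ n) := by
      rw [NormedSpace.exp_eq_tsum (𝕂 := ℝ)]; rfl
    rw [this, T.map_tsum hsum]
    congr 1
    ext n
    simp [hT, Matrix.traceLinearMap, Matrix.trace_smul, smul_eq_mul]
  have hsumf : Summable fun n : ℕ => (Nat.factorial n : ℝ)⁻¹ * (B ^ n).trace := by
    have := hsum.map T T.continuous
    convert this using 2 with n
    simp [hT, Matrix.traceLinearMap, Matrix.trace_smul, smul_eq_mul]
  have hzero : (Nat.factorial 0 :ℝ)⁻¹ * (B ^ 0).trace = d := by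
    simp [Matrix.trace_one]
  have hsplit : (NormedSpace.exp B).trace - d
      = ∑' n : ℕ, (Nat.factorial (n + 1) : ℝ)⁻¹ * (B ^ (n + 1)).trace := by
    rw [htr, Summable.tsum_eq_zero_add hsumf, hzero]
    ring
  have hnn : ∀ n : ℕ, 0 ≤ (Nat.factorial (n + 1) : ℝ)⁻¹ * (B ^ (n + 1)).trace := fun n =>
    mul_nonneg (by positivity) (aux_trace_pow_nonneg hB (n + 1))
  have hsumf' : Summable fun n : ℕ => (Nat.factorial (n + 1) : ℝ)⁻¹ * (B ^ (n + 1)).trace :=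
    (summable_nat_add_iff (f := fun n : ℕ => (Nat.factorial n : ℝ)⁻¹ * (B ^ n).trace) 1).mpr hsumf
  rw [hsplit, aux_no_cycle_iff hB]
  constructor
  · intro h
    have : ∀ n : ℕ, (Nat.factorial (n + 1) : ℝ)⁻¹ * (B ^ (n + 1)).trace = 0 := fun n => by
      rw [h n, mul_zero]
    simp [this]
  · intro h n
    by_contra hne
    have hpos : 0 < (Nat.factorial (n + 1) : ℝ)⁻¹ * (B ^ (n + 1)).trace := by
      have := lt_of_le_of_ne (aux_trace_pow_nonneg hB (n + 1)) (Ne.symm hne)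
      positivity
    have := Summable.tsum_pos hsumf' hnn n hpos
    linarith
end

section
/- Let B be a d×d matrix with nonnegative real entries such that Tr(e^B) = d. Then B, viewed as the weighted adjacency matrix of a directed graph with an edge i → j whenever B_{ij} > 0, defines a directed acyclic graph. -/
open Matrix

attribute [local instance] Matrix.linftyOpNormedRing Matrix.linftyOpNormedAlgebra

lemma pow_entry_nonneg {d : ℕ} (B : Matrix (Fin d) (Fin d) ℝ) (hB : ∀ i j, 0 ≤ B i j) :
    ∀ n i j, 0 ≤ (B ^ n) i j := by
  intro n
  induction n with
  | zero =>
    intro i j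
    simp only [pow_zero, Matrix.one_apply]
    split <;> norm_num
  | succ n ih =>
    intro i j
    rw [pow_succ, Matrix.mul_apply]
    exact Finset.sum_nonneg fun k _ => mul_nonneg (ih i k) (hB k j)

lemma pow_entry_pos {d : ℕ} (B : Matrix (Fin d) (Fin d) ℝ) (hB : ∀ i j, 0 ≤ B i j)
    (v : ℕ → Fin d) : ∀ k, (∀ i < k, 0 < B (v i) (v (i + 1))) →
    0 < (B ^ k) (v 0) (v k) := by
  intro k
  induction k with
  | zero => simp [Matrix.one_apply]
  | succ k ih =>
    intro h
    rw [pow_succ, Matrix.mul_apply]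
    refine Finset.sum_pos'
      (fun j _ => mul_nonneg (pow_entry_nonneg B hB k _ j) (hB j _))
      ⟨v k, Finset.mem_univ _, ?_⟩
    exact mul_pos (ih fun i hi => h i (by omega)) (h k (by omega))

/-- Let `B` be a `d × d` matrix with nonnegative real entries such that `Tr (e^B) = d`.
Then the directed graph with an edge `i → j` whenever `B i j > 0` is acyclic. -/
theorem acyclic_of_trace_exp_eq_card (d : ℕ) (B : Matrix (Fin d) (Fin d) ℝ)
    (hB : ∀ i j, 0 ≤ B i j) (htr : (NormedSpace.exp B).trace = d) :
    ¬ HasDirCycle (fun i j => 0 < B i j) := by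
  rintro ⟨k, v, hk, hvk, hcyc⟩
  set f : ℕ → ℝ := fun n => ((n.factorial : ℝ))⁻¹ • (B ^ n).trace with hf
  let T : Matrix (Fin d) (Fin d) ℝ →L[ℝ] ℝ :=
    LinearMap.toContinuousLinearMap (Matrix.traceLinearMap (Fin d) ℝ ℝ)
  have hsum : Summable fun n : ℕ => ((n.factorial : ℝ))⁻¹ • B ^ n :=
    NormedSpace.expSeries_summable' B
  have hsumf : Summable f := by
    have := hsum.map T T.continuous
    exact this.congr fun n => by
      simp [T, f, Matrix.traceLinearMap]
  have htsum : (NormedSpace.exp B).trace = ∑' n, f n := by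
    rw [NormedSpace.exp_eq_tsum (𝕂 := ℝ)]
    have := T.map_tsum hsum
    simpa [f, T] using this
  -- f 0 = d
  have hf0 : f 0 = d := by
    simp [f, Matrix.trace_one]
  have hfnonneg : ∀ n, 0 ≤ f n := fun n =>
    smul_nonneg (by positivity)
      (Finset.sum_nonneg fun i _ => pow_entry_nonneg B hB n i i)
  have htail : ∑' n, f (n + 1) = 0 := by
    have := (Summable.tsum_eq_zero_add hsumf)
    rw [htsum, this, hf0] at htr
    linarith
  have hfk_le : f k ≤ ∑' n, f (n + 1) := by
    obtain ⟨m, rfl⟩ : ∃ m, k = m + 1 := ⟨k - 1, by omega⟩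
    exact Summable.le_tsum (hsumf.comp_injective (add_left_injective 1)) m
      fun j _ => hfnonneg (j + 1)
  have hfk_pos : 0 < f k := by
    refine smul_pos (by positivity) ?_
    refine Finset.sum_pos' (fun i _ => pow_entry_nonneg B hB k i i)
      ⟨v 0, Finset.mem_univ _, ?_⟩
    have := pow_entry_pos B hB v k hcyc
    rwa [← hvk] at this
  linarith [htail ▸ hfk_le]
end
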